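/- Two tiles P and P′ intersect (as subsets of ℝ²) if and only if P ≤ P′ or P′ ≤ P. -/

import Mathlib

open MeasureTheory Set

/-- The Walsh functions `w_l : ℝ → ℝ`, defined recursively by
`w_0 = χ_{[0,1)}`, `w_{2l}(x) = w_l(2x) + w_l(2x−1)`,
`w_{2l+1}(x) = w_l(2x) − w_l(2x−1)`. -/
noncomputable def walsh : ℕ → ℝ → ℝ
  | 0, x => if x ∈ Set.Ico (0:ℝ) 1 then 1 else 0
  | (n+1), x =>
      if (n+1) % 2 = 0 then walsh ((n+1)/2) (2*x) + walsh ((n+1)/2) (2*x - 1)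
      else walsh ((n+1)/2) (2*x) - walsh ((n+1)/2) (2*x - 1)
  decreasing_by all_goals exact Nat.div_lt_self (Nat.succ_pos n) one_lt_two

/-- A tile `[2^{-k}n, 2^{-k}(n+1)) × [2^k l, 2^k(l+1))`:
a half-open dyadic rectangle of area one. -/
structure Tile where
  k : ℤ
  n : ℤ
  l : ℤ
deriving DecidableEq

namespace Tile

/-- The time interval `I_P = [2^{-k}n, 2^{-k}(n+1))` of a tile. -/
noncomputable def I (p : Tile) : Set ℝ := Set.Ico ((2:ℝ)^(-p.k) * p.n) ((2:ℝ)^(-p.k) * (p.n+1))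

/-- The frequency interval `ω_P = [2^k l, 2^k(l+1))` of a tile. -/
noncomputable def freq (p : Tile) : Set ℝ := Set.Ico ((2:ℝ)^(p.k) * p.l) ((2:ℝ)^(p.k) * (p.l+1))

/-- The tile as a subset `I_P × ω_P` of the time-frequency plane. -/
noncomputable def area (p : Tile) : Set (ℝ × ℝ) := p.I ×ˢ p.freq

/-- The length `|I_P| = 2^{-k}` of the time interval of a tile. -/
noncomputable def len (p : Tile) : ℝ := (2:ℝ)^(-p.k)

/-- The center `ξ_P` of the frequency interval of a tile. -/
noncomputable def ξ (p : Tile) : ℝ := (2:ℝ)^(p.k) * ((p.l : ℝ) + 1/2)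

/-- The tile order: `p < q` iff `I_p ⊊ I_q` and `ω_q ⊆ ω_p`. -/
def lt (p q : Tile) : Prop := p.I ⊂ q.I ∧ q.freq ⊆ p.freq

/-- `p ≤ q` iff `p < q` or `p = q`. -/
def le (p q : Tile) : Prop := Tile.lt p q ∨ p = q

/-- The Walsh wave packet `φ_P(x) = 2^{k/2} w_l(2^k x − n)` of a tile. -/
noncomputable def wp (p : Tile) : ℝ → ℝ :=
  fun x => Real.sqrt ((2:ℝ)^(p.k)) * walsh p.l.toNat ((2:ℝ)^(p.k) * x - p.n)

end Tile

/-- A quartile `[2^{-k}n, 2^{-k}(n+1)) × [2^{k+2}l, 2^{k+2}(l+1))`: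
a dyadic rectangle of area four. -/
structure Quartile where
  k : ℤ
  n : ℤ
  l : ℤ
deriving DecidableEq

namespace Quartile

/-- The time interval `I_P` of a quartile. -/
noncomputable def I (P : Quartile) : Set ℝ := Set.Ico ((2:ℝ)^(-P.k) * P.n) ((2:ℝ)^(-P.k) * (P.n+1))

/-- The length `|I_P| = 2^{-k}` of the time interval of a quartile. -/
noncomputable def len (P : Quartile) : ℝ := (2:ℝ)^(-P.k)

/-- The `j`-th sub-tile `P_j = I_P × [2^k(4l+j−1), 2^k(4l+j))` of a quartile,
for `j = 1, 2, 3`. -/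
def tile (P : Quartile) (j : ℕ) : Tile := ⟨P.k, P.n, 4*P.l + ((j - 1 : ℕ) : ℤ)⟩

end Quartile

/-- `T` is an `i`-tree with top `top`: `P_i ≤ top_i` for all `P ∈ T`. -/
def IsTree (i : ℕ) (top : Quartile) (T : Finset Quartile) : Prop :=
  ∀ P ∈ T, Tile.le (P.tile i) (top.tile i)

/-- `size_j((a_P)_{P∈Ps})`: the sup over trees `T ⊆ Ps` which are `i`-trees for
some `i ≠ j` of `(|I_T|⁻¹ Σ_{P∈T} |a_{P_j}|²)^{1/2}`. -/
noncomputable def size (Ps : Finset Quartile) (j : ℕ) (a : Quartile → ℂ) : ℝ :=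
  sSup ((fun p : Quartile × Finset Quartile =>
      Real.sqrt ((∑ P ∈ p.2, ‖a P‖^2) / p.1.len)) ''
    {p | p.2 ⊆ Ps ∧ ∃ i ∈ ({1,2,3} : Set ℕ), i ≠ j ∧ IsTree i p.1 p.2})

/-- `energy_j((a_P)_{P∈Ps})`: the sup over subsets `D ⊆ Ps` with
`{P_j : P ∈ D}` pairwise disjoint of `(Σ_{P∈D} |a_{P_j}|²)^{1/2}`. -/
noncomputable def energy (Ps : Finset Quartile) (j : ℕ) (a : Quartile → ℂ) : ℝ :=
  sSup ((fun D : Finset Quartile => Real.sqrt (∑ P ∈ D, ‖a P‖^2)) ''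
    {D | D ⊆ Ps ∧ ∀ P ∈ D, ∀ P' ∈ D, P ≠ P' →
      Disjoint (P.tile j).area (P'.tile j).area})

/-- The `L^{1,∞}(I)` quasinorm `sup_{λ>0} λ |{x ∈ I : |g(x)| > λ}|`. -/
noncomputable def weakL1 (g : ℝ → ℝ) (I : Set ℝ) : ℝ :=
  sSup {r | ∃ lam : ℝ, 0 < lam ∧ r = lam * (volume {x ∈ I | lam < |g x|}).toReal}

/-- The square function `(Σ_{P∈T} |a_{P_j}|² χ_{I_P}/|I_P|)^{1/2}` of a tree. -/
noncomputable def treeFn (T : Finset Quartile) (a : Quartile → ℂ) : ℝ → ℝ :=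
  fun x => Real.sqrt (∑ P ∈ T, ‖a P‖^2 * (P.I.indicator (fun _ => (1:ℝ)) x) / P.len)

/-!
A point `x` lies in the dyadic interval `[2^k n, 2^k (n+1))` iff `⌊x / 2^k⌋ = n`, and for `k' ≤ k`
the coarse index `⌊x / 2^k⌋` is the integer quotient of the fine index `⌊x / 2^k'⌋` by
`2^(k - k')`. Hence two dyadic intervals that meet are nested, the shorter inside the longer.
A tile meets another iff both their time and their frequency intervals meet; since the time
scale of a tile is `2^(-k)` and its frequency scale `2^k`, the tile with the longer time interval
has the shorter frequency interval, which is exactly comparability in the tile order.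
-/

-- `Tile.I p` and `Tile.freq p` are definitionally `dyadicIco (-p.k) p.n` and `dyadicIco p.k p.l`.
noncomputable def dyadicIco (k n : ℤ) : Set ℝ := Ico ((2:ℝ)^k * n) ((2:ℝ)^k * (n+1))

lemma dyadicIco_nonempty (k n : ℤ) : (dyadicIco k n).Nonempty :=
  nonempty_Ico.2 <| mul_lt_mul_of_pos_left (by linarith) (zpow_pos two_pos k)

lemma mem_dyadicIco_iff {k n : ℤ} {x : ℝ} : x ∈ dyadicIco k n ↔ ⌊x / 2^k⌋ = n := by
  have h := zpow_pos (two_pos : (0:ℝ) < 2) k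
  rw [Int.floor_eq_iff, le_div_iff₀ h, div_lt_iff₀ h, mul_comm _ (2^k), mul_comm _ (2^k)]
  rfl

lemma floor_div_two_zpow_of_le {k' k : ℤ} (hk : k' ≤ k) (x : ℝ) :
    ⌊x / 2^k⌋ = ⌊x / 2^k'⌋ / 2^(k - k').toNat := by
  have h2 : (2:ℝ)^k = 2^k' * ((2^(k - k').toNat : ℕ) : ℝ) := by
    rw [Nat.cast_pow, Nat.cast_ofNat, ← zpow_natCast, Int.toNat_of_nonneg (by omega),
      ← zpow_add₀ two_ne_zero, add_sub_cancel]
  rw [h2, ← div_div, Int.floor_div_natCast]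
  norm_cast

lemma dyadicIco_subset_of_le {k' k n' n : ℤ} (hk : k' ≤ k)
    (h : (dyadicIco k' n' ∩ dyadicIco k n).Nonempty) : dyadicIco k' n' ⊆ dyadicIco k n := by
  obtain ⟨x, hx', hx⟩ := h
  intro y hy
  rw [mem_dyadicIco_iff] at *
  rw [floor_div_two_zpow_of_le hk] at hx ⊢
  rwa [hy, ← hx']

lemma eq_of_dyadicIco_inter_nonempty {k n n' : ℤ}
    (h : (dyadicIco k n ∩ dyadicIco k n').Nonempty) : n = n' := by
  obtain ⟨x, hx, hx'⟩ := h
  exact (mem_dyadicIco_iff.1 hx).symm.trans (mem_dyadicIco_iff.1 hx')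

lemma scale_eq_of_dyadicIco_eq {k k' n n' : ℤ} (h : dyadicIco k n = dyadicIco k' n') :
    k = k' := by
  obtain ⟨hleft, hright⟩ :=
    (Ico_eq_Ico_iff (Or.inl (nonempty_Ico.1 (dyadicIco_nonempty k n)))).1 h
  have hlen : (2:ℝ)^k = 2^k' := by linear_combination hright - hleft
  exact (zpow_right_inj₀ two_pos (by norm_num)).1 hlen

lemma dyadicIco_ssubset_of_lt {k' k n' n : ℤ} (hk : k' < k)
    (h : (dyadicIco k' n' ∩ dyadicIco k n).Nonempty) : dyadicIco k' n' ⊂ dyadicIco k n :=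
  (dyadicIco_subset_of_le hk.le h).ssubset_of_ne fun he => hk.ne (scale_eq_of_dyadicIco_eq he)

namespace Tile

lemma area_inter_nonempty_iff {p q : Tile} :
    (p.area ∩ q.area).Nonempty ↔ (p.I ∩ q.I).Nonempty ∧ (p.freq ∩ q.freq).Nonempty := by
  rw [area, area, prod_inter_prod, prod_nonempty_iff]

lemma area_inter_nonempty_of_le {p q : Tile} (h : p.le q) : (p.area ∩ q.area).Nonempty := by
  rcases h with ⟨hI, hfreq⟩ | rfl
  · rw [area_inter_nonempty_iff, inter_eq_left.2 hI.subset, inter_eq_right.2 hfreq]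
    exact ⟨dyadicIco_nonempty _ _, dyadicIco_nonempty _ _⟩
  · rw [inter_self]
    exact (dyadicIco_nonempty _ _).prod (dyadicIco_nonempty _ _)

lemma lt_of_k_lt {p q : Tile} (hk : p.k < q.k) (h : (p.area ∩ q.area).Nonempty) : q.lt p := by
  obtain ⟨hI, hfreq⟩ := area_inter_nonempty_iff.1 h
  exact ⟨dyadicIco_ssubset_of_lt (neg_lt_neg hk) (inter_comm p.I q.I ▸ hI),
    dyadicIco_subset_of_le hk.le hfreq⟩

lemma eq_of_k_eq {p q : Tile} (hk : p.k = q.k) (h : (p.area ∩ q.area).Nonempty) : p = q := by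
  obtain ⟨hI, hfreq⟩ := area_inter_nonempty_iff.1 h
  obtain ⟨k, n, l⟩ := p
  obtain ⟨k', n', l'⟩ := q
  obtain rfl : k = k' := hk
  obtain rfl : n = n' := eq_of_dyadicIco_inter_nonempty hI
  obtain rfl : l = l' := eq_of_dyadicIco_inter_nonempty hfreq
  rfl

end Tile

/-- two tiles intersect (as subsets of the plane) iff they are
comparable in the tile order. -/
theorem tile_intersect_iff_comparable (p q : Tile) :
    (p.area ∩ q.area).Nonempty ↔ Tile.le p q ∨ Tile.le q p := by
  constructor
  · intro h
    rcases lt_trichotomy p.k q.k with hk | hk | hk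
    · exact Or.inr (Or.inl (Tile.lt_of_k_lt hk h))
    · exact Or.inl (Or.inr (Tile.eq_of_k_eq hk h))
    · exact Or.inl (Or.inl (Tile.lt_of_k_lt hk (inter_comm p.area q.area ▸ h)))
  · rintro (h | h)
    · exact Tile.area_inter_nonempty_of_le h
    · exact inter_comm q.area p.area ▸ Tile.area_inter_nonempty_of_le h
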